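/- Let β ∈ ℂ with Re(β) > 0. With φ_{β,k}(x) = He_{k−1}(√β x)e^{−βx²/2}, one has ∫_ℝ φ_{\bar β,k}(x)\,φ_{β,1}(x)\,dx = √(π/β) if k = 1, and = 0 if k ≠ 1. In particular ⟨φ_{\bar β,1}, φ_{β,1}⟩ ≠ 0. -/

import Mathlib

/-!
With `c = √β` and `g(w) = e^{-w²}`, the product `φ_{β,k}(x) φ_{β,1}(x)` equals
`(-1)^{k-1} g^{(k-1)}(c x)`, and conjugating `φ_{β̄,k}` turns it into `φ_{β,k}`. For `k = 1`
this is the Gaussian `e^{-β x²}`, whose integral is `√(π/β)`. For `k ≥ 2` it is, up to the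
factor `c⁻¹`, the derivative of `x ↦ g^{(k-2)}(c x)`; both are polynomials times `e^{-β x²}`,
hence integrable, so the integral of the derivative vanishes.
-/

open MeasureTheory

/-- The `j`-th (physicists') Hermite function value:
`He_j(z) = (-1)^j e^{z²} (d/dz)^j e^{-z²}`. -/
noncomputable def hermiteHe (j : ℕ) (z : ℂ) : ℂ :=
  (-1 : ℂ) ^ j * Complex.exp (z ^ 2) *
    iteratedDeriv j (fun w : ℂ => Complex.exp (-w ^ 2)) z

/-- `φ_{β,k}(x) = He_{k-1}(√β x) e^{-β x²/2}`, with `√β` the principal root. -/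
noncomputable def daviesEigenfun (β : ℂ) (k : ℕ) (x : ℝ) : ℂ :=
  hermiteHe (k - 1) (β ^ ((1 : ℂ) / 2) * (x : ℂ)) * Complex.exp (-β * (x : ℂ) ^ 2 / 2)

open Complex Polynomial

noncomputable def gaussianDerivPoly : ℕ → ℂ[X]
  | 0 => 1
  | j + 1 => derivative (gaussianDerivPoly j) - C 2 * X * gaussianDerivPoly j

lemma hasDerivAt_eval_mul_cexp_neg_sq (p : ℂ[X]) (z : ℂ) :
    HasDerivAt (fun w => p.eval w * cexp (-w ^ 2))
      ((derivative p - C 2 * X * p).eval z * cexp (-z ^ 2)) z := by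
  have hexp : HasDerivAt (fun w : ℂ => cexp (-w ^ 2)) (cexp (-z ^ 2) * -(2 * z)) z := by
    simpa using ((hasDerivAt_pow 2 z).fun_neg).cexp
  refine ((p.hasDerivAt z).fun_mul hexp).congr_deriv ?_
  simp only [eval_sub, eval_mul, eval_C, eval_X]
  ring

lemma iteratedDeriv_cexp_neg_sq (j : ℕ) :
    iteratedDeriv j (fun w : ℂ => cexp (-w ^ 2))
      = fun z => (gaussianDerivPoly j).eval z * cexp (-z ^ 2) := by
  induction j with
  | zero => simp [gaussianDerivPoly]
  | succ j ih =>
    rw [iteratedDeriv_succ, ih]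
    exact funext fun z => (hasDerivAt_eval_mul_cexp_neg_sq _ z).deriv

lemma map_conj_gaussianDerivPoly (j : ℕ) :
    (gaussianDerivPoly j).map (starRingEnd ℂ) = gaussianDerivPoly j := by
  induction j with
  | zero => simp [gaussianDerivPoly]
  | succ j ih =>
    rw [gaussianDerivPoly, Polynomial.map_sub, Polynomial.map_mul, Polynomial.map_mul, map_C,
      map_X, ← derivative_map, ih, map_ofNat]

lemma hermiteHe_mul_cexp_neg_sq (j : ℕ) (z : ℂ) :
    hermiteHe j z * cexp (-z ^ 2) =
      (-1) ^ j * iteratedDeriv j (fun w : ℂ => cexp (-w ^ 2)) z := by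
  have h : cexp (z ^ 2) * cexp (-z ^ 2) = 1 := by rw [← Complex.exp_add, add_neg_cancel, exp_zero]
  rw [hermiteHe]
  linear_combination ((-1) ^ j * iteratedDeriv j (fun w : ℂ => cexp (-w ^ 2)) z) * h

lemma hermiteHe_eq_eval (j : ℕ) (z : ℂ) :
    hermiteHe j z = (-1) ^ j * (gaussianDerivPoly j).eval z :=
  mul_right_cancel₀ (Complex.exp_ne_zero (-z ^ 2)) <| by
    rw [hermiteHe_mul_cexp_neg_sq, iteratedDeriv_cexp_neg_sq, mul_assoc]

lemma hermiteHe_zero (z : ℂ) : hermiteHe 0 z = 1 := by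
  simp [hermiteHe_eq_eval, gaussianDerivPoly]

lemma conj_hermiteHe (j : ℕ) (z : ℂ) :
    starRingEnd ℂ (hermiteHe j z) = hermiteHe j (starRingEnd ℂ z) := by
  rw [hermiteHe_eq_eval, hermiteHe_eq_eval, map_mul, ← eval₂_at_apply, ← eval_map,
    map_conj_gaussianDerivPoly]
  simp

section Integrability

variable {b : ℂ}

lemma integrable_pow_mul_cexp_neg_mul_sq (hb : 0 < b.re) (n : ℕ) :
    Integrable fun x : ℝ => (x : ℂ) ^ n * cexp (-b * (x : ℂ) ^ 2) := by
  have hreal : Integrable fun x : ℝ => x ^ n * Real.exp (-b.re * x ^ 2) := by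
    simpa [Real.rpow_natCast] using
      integrable_rpow_mul_exp_neg_mul_sq hb (s := n) (by linarith [n.cast_nonneg (α := ℝ)])
  refine hreal.norm.mono' (by fun_prop) (.of_forall fun x => ?_)
  rw [norm_mul, norm_pow, norm_real, norm_cexp_neg_mul_sq, norm_mul, norm_pow,
    Real.norm_of_nonneg (Real.exp_pos _).le]

lemma integrable_eval_mul_cexp_neg_mul_sq (hb : 0 < b.re) (p : ℂ[X]) :
    Integrable fun x : ℝ => p.eval (x : ℂ) * cexp (-b * (x : ℂ) ^ 2) := by
  simp_rw [eval_eq_sum_range, Finset.sum_mul, mul_assoc]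
  exact integrable_finsetSum _ fun i _ => (integrable_pow_mul_cexp_neg_mul_sq hb i).const_mul _

end Integrability

section GaussianDerivatives

variable {c : ℂ}

lemma integrable_iteratedDeriv_cexp_neg_sq_comp_mul (hc : 0 < (c ^ 2).re) (j : ℕ) :
    Integrable fun x : ℝ => iteratedDeriv j (fun w : ℂ => cexp (-w ^ 2)) (c * x) := by
  have := integrable_eval_mul_cexp_neg_mul_sq hc ((gaussianDerivPoly j).comp (C c * X))
  simpa only [iteratedDeriv_cexp_neg_sq, eval_comp, eval_mul, eval_C, eval_X, mul_pow,
    neg_mul] using this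

lemma integral_iteratedDeriv_succ_cexp_neg_sq_comp_mul (hc : 0 < (c ^ 2).re) (m : ℕ) :
    ∫ x : ℝ, iteratedDeriv (m + 1) (fun w : ℂ => cexp (-w ^ 2)) (c * x) = 0 := by
  set g : ℂ → ℂ := fun w => cexp (-w ^ 2)
  have hc0 : c ≠ 0 := by rintro rfl; simp at hc
  have hderiv (x : ℝ) : HasDerivAt (fun x : ℝ => iteratedDeriv m g (c * x))
      (c * iteratedDeriv (m + 1) g (c * x)) x := by
    have hg : HasDerivAt (iteratedDeriv m g) (iteratedDeriv (m + 1) g (c * x)) (c * x) := by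
      rw [iteratedDeriv_succ]
      exact ((by fun_prop : ContDiff ℂ (m + 1) g).differentiable_iteratedDeriv' m _).hasDerivAt
    simpa [mul_comm] using (hg.comp _ ((hasDerivAt_id (x : ℂ)).const_mul c)).comp_ofReal
  have := integral_eq_zero_of_hasDerivAt_of_integrable hderiv
    ((integrable_iteratedDeriv_cexp_neg_sq_comp_mul hc (m + 1)).const_mul c)
    (integrable_iteratedDeriv_cexp_neg_sq_comp_mul hc m)
  rwa [integral_const_mul, mul_eq_zero, or_iff_right hc0] at this

end GaussianDerivatives

lemma daviesEigenfun_mul_daviesEigenfun_one (β : ℂ) (k : ℕ) (x : ℝ) :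
    daviesEigenfun β k x * daviesEigenfun β 1 x =
      (-1) ^ (k - 1) *
        iteratedDeriv (k - 1) (fun w : ℂ => cexp (-w ^ 2)) (β ^ ((1 : ℂ) / 2) * x) := by
  rw [← hermiteHe_mul_cexp_neg_sq, mul_pow, one_div, cpow_ofNat_inv_pow]
  simp only [daviesEigenfun, Nat.sub_self, hermiteHe_zero, one_mul, one_div]
  rw [mul_assoc, ← Complex.exp_add]
  ring_nf

section Davies

variable {β : ℂ}

lemma conj_daviesEigenfun_conj (hβ : β.arg ≠ Real.pi) (k : ℕ) (x : ℝ) :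
    starRingEnd ℂ (daviesEigenfun (starRingEnd ℂ β) k x) = daviesEigenfun β k x := by
  have hsqrt : starRingEnd ℂ (starRingEnd ℂ β ^ ((1 : ℂ) / 2)) = β ^ ((1 : ℂ) / 2) := by
    rw [conj_cpow β _ hβ, conj_conj, map_div₀, map_one, map_ofNat]
  simp only [daviesEigenfun, map_mul, conj_hermiteHe, hsqrt, conj_ofReal, ← exp_conj, map_div₀,
    map_neg, map_pow, conj_conj, map_ofNat]

lemma integral_daviesEigenfun_one_mul_self (hβ : 0 < β.re) :
    ∫ x : ℝ, daviesEigenfun β 1 x * daviesEigenfun β 1 x =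
      (Real.pi / β) ^ ((1 : ℂ) / 2) := by
  simp only [daviesEigenfun_mul_daviesEigenfun_one, Nat.sub_self, pow_zero, one_mul,
    iteratedDeriv_zero, mul_pow, one_div, cpow_ofNat_inv_pow]
  simpa only [neg_mul, one_div] using integral_gaussian_complex hβ

lemma integral_daviesEigenfun_mul_daviesEigenfun_one_eq_zero (hβ : 0 < β.re) (m : ℕ) :
    ∫ x : ℝ, daviesEigenfun β (m + 2) x * daviesEigenfun β 1 x = 0 := by
  have hsq : 0 < ((β ^ ((1 : ℂ) / 2)) ^ 2).re := by rwa [one_div, cpow_ofNat_inv_pow]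
  simp only [daviesEigenfun_mul_daviesEigenfun_one, integral_const_mul]
  rw [show m + 2 - 1 = m + 1 from rfl, integral_iteratedDeriv_succ_cexp_neg_sq_comp_mul hsq,
    mul_zero]

end Davies

/-- For `Re β > 0` and `k ≥ 1`:
`⟨φ_{β̄,k}, φ_{β,1}⟩ = √(π/β)` if `k = 1` and `0` otherwise; in particular
`⟨φ_{β̄,1}, φ_{β,1}⟩ ≠ 0`. -/
theorem stmt9 (β : ℂ) (hβ : 0 < β.re) (k : ℕ) (hk : 1 ≤ k) :
    ((∫ x : ℝ, (starRingEnd ℂ) (daviesEigenfun ((starRingEnd ℂ) β) k x) *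
        daviesEigenfun β 1 x) =
      if k = 1 then ((Real.pi : ℂ) / β) ^ ((1 : ℂ) / 2) else 0) ∧
    (∫ x : ℝ, (starRingEnd ℂ) (daviesEigenfun ((starRingEnd ℂ) β) 1 x) *
        daviesEigenfun β 1 x) ≠ 0 := by
  have harg : β.arg ≠ Real.pi := fun h => (arg_eq_pi_iff.mp h).1.not_gt hβ
  simp_rw [conj_daviesEigenfun_conj harg, integral_daviesEigenfun_one_mul_self hβ]
  refine ⟨?_, ?_⟩
  · rcases k with _ | _ | m
    · omega
    · exact (integral_daviesEigenfun_one_mul_self hβ).trans (if_pos rfl).symm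
    · exact integral_daviesEigenfun_mul_daviesEigenfun_one_eq_zero hβ m
  · have hβ0 : β ≠ 0 := by rintro rfl; simp at hβ
    rw [Ne, cpow_eq_zero_iff, not_and_or]
    exact .inl (div_ne_zero (ofReal_ne_zero.mpr Real.pi_ne_zero) hβ0)
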